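/- arXiv:2011.07153 — 3 statements merged into one kernel-verified Lean document; each statement's English description precedes it below -/
import Mathlib

section
/- With notation as in the context: let S₁, S₂ ⊆ ι be disjoint finite subsets and let Y ∈ ι be an element with Y ∉ S₁ and Y ∉ S₂. Then ∂(e_{S₁} · e_{S₂}) lies in the two-sided ideal of Λ generated by the two elements ∂(e_{S₁ ∪ {Y}}) and ∂(e_{S₂ ∪ {Y}}). -/
/-!
Writing `e = e_Y`, the Leibniz rule `∂(xy) = ∂x·y + x̂·∂y` for the contraction (with `x̂` the grade
involution) together with `∂(e y) = y - e ∂y` and `∂(x e) = ∂x·e + x̂` gives, for all `x, y`,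
`∂(xy) = ∂x · ∂(e y) + ∂(x e) · ∂y`: the two cross terms `∓ ∂x·e·∂y` cancel. Taking
`x = e_{S₁}`, `y = e_{S₂}`, the products `e_{S₁} e` and `e e_{S₂}` are `± e_{S₁ ∪ {Y}}` and
`± e_{S₂ ∪ {Y}}`, which exhibits `∂(e_{S₁} e_{S₂})` as an element of the ideal.
-/

noncomputable section

/-- The degree-one generator `e_y` of the exterior algebra of the free module on `ι`. -/
def extGen (R : Type*) [CommRing R] {ι : Type*} (y : ι) :
    ExteriorAlgebra R (ι →₀ R) :=
  ExteriorAlgebra.ι R (Finsupp.single y 1)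

/-- The linear functional `f` on the free module with `f(b_y) = 1` for every `y`. -/
def allOneFunctional (R : Type*) [CommRing R] (ι : Type*) :
    Module.Dual R (ι →₀ R) :=
  Finsupp.linearCombination R (fun _ : ι => (1 : R))

/-- The left interior product (contraction) `∂` by the all-one functional on the exterior
algebra `Λ = ExteriorAlgebra R (ι →₀ R)`. -/
def extContraction (R : Type*) [CommRing R] (ι : Type*) :
    ExteriorAlgebra R (ι →₀ R) →ₗ[R] ExteriorAlgebra R (ι →₀ R) :=
  CliffordAlgebra.contractLeft (allOneFunctional R ι)

/-- For a finite subset `S ⊆ ι` (with `ι` linearly ordered), `e_S` is the product of the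
generators `e_y`, `y ∈ S`, taken in increasing order (with `e_∅ = 1`). -/
def extProd (R : Type*) [CommRing R] {ι : Type*} [LinearOrder ι] (S : Finset ι) :
    ExteriorAlgebra R (ι →₀ R) :=
  ((S.sort (· ≤ ·)).map (extGen R)).prod

namespace ExteriorAlgebra

variable {R M : Type*} [CommRing R] [AddCommGroup M] [Module R M]

open CliffordAlgebra

theorem contractLeft_mul (d : Module.Dual R M) (x y : ExteriorAlgebra R M) :
    contractLeft d (x * y) = contractLeft d x * y + involute x * contractLeft d y := by
  induction x using CliffordAlgebra.induction generalizing y with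
  | algebraMap r =>
    rw [Algebra.commutes, contractLeft_mul_algebraMap, contractLeft_algebraMap, zero_mul,
      zero_add, involute.commutes, Algebra.commutes]
  | ι m =>
    rw [contractLeft_ι_mul, contractLeft_ι, involute_ι, Algebra.smul_def, sub_eq_add_neg,
      neg_mul]
  | mul x₁ x₂ h₁ h₂ =>
    rw [mul_assoc, h₁ (x₂ * y), h₂ y, h₁ x₂, map_mul]
    noncomm_ring
  | add x₁ x₂ h₁ h₂ =>
    rw [add_mul, map_add, h₁, h₂, map_add, add_mul, map_add, add_mul]
    abel

theorem smul_contractLeft_mul (d : Module.Dual R M) (m : M) (x y : ExteriorAlgebra R M) :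
    d m • contractLeft d (x * y) =
      contractLeft d x * contractLeft d (ι R m * y) +
        contractLeft d (x * ι R m) * contractLeft d y := by
  rw [contractLeft_mul, contractLeft_mul d x (ι R m), contractLeft_ι_mul, contractLeft_ι,
    ← Algebra.commutes, ← Algebra.smul_def]
  simp only [mul_sub, add_mul, mul_smul_comm, smul_mul_assoc, smul_add, mul_assoc]
  abel

theorem exists_prod_map_ι_eq_zsmul_of_perm {α : Type*} (f : α → M) {l l' : List α}
    (h : l.Perm l') :
    ∃ u : ℤˣ, (l.map (ι R ∘ f)).prod = (u : ℤ) • (l'.map (ι R ∘ f)).prod := by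
  induction h with
  | nil => exact ⟨1, by simp⟩
  | cons a _ ih =>
    obtain ⟨u, hu⟩ := ih
    exact ⟨u, by simp only [List.map_cons, List.prod_cons, hu, mul_smul_comm]⟩
  | swap a b t =>
    refine ⟨-1, ?_⟩
    simp only [List.map_cons, List.prod_cons, ← mul_assoc, Units.val_neg, Units.val_one,
      neg_smul, one_smul, ← neg_mul, Function.comp_apply,
      eq_neg_of_add_eq_zero_left (ι_add_mul_swap (f b) (f a))]
  | trans _ _ ih₁ ih₂ =>
    obtain ⟨u₁, hu₁⟩ := ih₁
    obtain ⟨u₂, hu₂⟩ := ih₂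
    exact ⟨u₁ * u₂, by rw [hu₁, hu₂, smul_smul, Units.val_mul]⟩

end ExteriorAlgebra

theorem Finset.cons_sort_perm_sort_insert {ι : Type*} [LinearOrder ι] {S : Finset ι} {Y : ι}
    (hY : Y ∉ S) : (Y :: S.sort (· ≤ ·)).Perm ((insert Y S).sort (· ≤ ·)) := by
  rw [List.perm_ext_iff_of_nodup (List.nodup_cons.2 ⟨by simpa using hY, S.sort_nodup _⟩)
    ((insert Y S).sort_nodup _)]
  simp

section

variable {R : Type*} [CommRing R] {ι : Type*} [LinearOrder ι]

theorem exists_extGen_mul_extProd_eq_zsmul {S : Finset ι} {Y : ι} (hY : Y ∉ S) :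
    ∃ u : ℤˣ, extGen R Y * extProd R S = (u : ℤ) • extProd R (insert Y S) :=
  ExteriorAlgebra.exists_prod_map_ι_eq_zsmul_of_perm (Finsupp.single · (1 : R))
    (Finset.cons_sort_perm_sort_insert hY)

theorem exists_extProd_mul_extGen_eq_zsmul {S : Finset ι} {Y : ι} (hY : Y ∉ S) :
    ∃ u : ℤˣ, extProd R S * extGen R Y = (u : ℤ) • extProd R (insert Y S) := by
  obtain ⟨u, hu⟩ := ExteriorAlgebra.exists_prod_map_ι_eq_zsmul_of_perm (R := R)
    (Finsupp.single · (1 : R))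
    ((List.perm_append_singleton Y _).trans (Finset.cons_sort_perm_sort_insert hY))
  rw [List.map_append, List.prod_append, List.map_singleton, List.prod_singleton] at hu
  exact ⟨u, hu⟩

end

theorem contraction_prod_mem_span_general
    (R : Type*) [CommRing R] (ι : Type*) [LinearOrder ι]
    (S₁ S₂ : Finset ι)
    (Y : ι) (hY₁ : Y ∉ S₁) (hY₂ : Y ∉ S₂) :
    extContraction R ι (extProd R S₁ * extProd R S₂) ∈
      TwoSidedIdeal.span {extContraction R ι (extProd R (insert Y S₁)),
        extContraction R ι (extProd R (insert Y S₂))} := by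
  rw [TwoSidedIdeal.mem_span_iff]
  intro I hI
  have hsplit := ExteriorAlgebra.smul_contractLeft_mul (allOneFunctional R ι)
    (Finsupp.single Y 1) (extProd R S₁) (extProd R S₂)
  rw [show allOneFunctional R ι (Finsupp.single Y 1) = 1 by simp [allOneFunctional],
    one_smul] at hsplit
  obtain ⟨u₁, hu₁⟩ := exists_extProd_mul_extGen_eq_zsmul (R := R) hY₁
  obtain ⟨u₂, hu₂⟩ := exists_extGen_mul_extProd_eq_zsmul (R := R) hY₂
  have h₁ : extContraction R ι (extProd R S₁ * extGen R Y) ∈ I := by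
    rw [hu₁, map_zsmul]
    exact I.zsmul_mem _ (hI (Set.mem_insert _ _))
  have h₂ : extContraction R ι (extGen R Y * extProd R S₂) ∈ I := by
    rw [hu₂, map_zsmul]
    exact I.zsmul_mem _ (hI (Set.mem_insert_of_mem _ rfl))
  rw [extContraction, hsplit]
  exact I.add_mem (I.mul_mem_left _ _ h₂) (I.mul_mem_right _ _ h₁)

/-- If `S₁, S₂ ⊆ ι` are disjoint finite subsets and `Y ∈ ι` lies in neither,
then `∂(e_{S₁} · e_{S₂})` lies in the two-sided ideal of `Λ` generated by
`∂(e_{S₁ ∪ {Y}})` and `∂(e_{S₂ ∪ {Y}})`. -/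
theorem contraction_prod_mem_span
    (R : Type*) [CommRing R] (ι : Type*) [LinearOrder ι]
    (S₁ S₂ : Finset ι) (hdisj : Disjoint S₁ S₂)
    (Y : ι) (hY₁ : Y ∉ S₁) (hY₂ : Y ∉ S₂) :
    extContraction R ι (extProd R S₁ * extProd R S₂) ∈
      TwoSidedIdeal.span {extContraction R ι (extProd R (insert Y S₁)),
        extContraction R ι (extProd R (insert Y S₂))} :=
  contraction_prod_mem_span_general R ι S₁ S₂ Y hY₁ hY₂
end
end

section
/- With notation as in the context: for every integer h ≥ 3 and every sequence i₁, …, i_h of pairwise distinct elements of {1,…,n}, the element ∂(e_{i₁ i₂} · e_{i₂ i₃} ⋯ e_{i_{h−1} i_h} · e_{i_h i₁}) lies in the two-sided ideal J. -/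
noncomputable section

/-- The index type: the disjoint union of the set of 2-element subsets `{i,j}` of `{1,…,n}`
(encoded as non-diagonal elements of `Sym2 (Fin n)`) and the set `{1,…,n} × {1,…,r}`. -/
abbrev OSIndex (n r : ℕ) : Type :=
  {p : Sym2 (Fin n) // ¬ p.IsDiag} ⊕ (Fin n × Fin r)

/-- The exterior algebra `Λ` on the free `R`-module with basis `OSIndex n r`. -/
abbrev OSAlgebra (R : Type) [CommRing R] (n r : ℕ) : Type :=
  ExteriorAlgebra R (OSIndex n r →₀ R)

variable (R : Type) [CommRing R] (n r : ℕ)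

/-- The generator `e_{ij} = e_{ji}` attached to the pair `{i,j}` (for `i ≠ j`; the value at
`i = j` is junk and is never used below). -/
def eP (i j : Fin n) : OSAlgebra R n r :=
  if h : i = j then 0
  else ExteriorAlgebra.ι R
    (Finsupp.single (Sum.inl ⟨s(i, j), fun hd => h (Sym2.mk_isDiag_iff.mp hd)⟩) 1)

/-- The generator `e_i^s` attached to `(i, s)`. -/
def eQ (i : Fin n) (s : Fin r) : OSAlgebra R n r :=
  ExteriorAlgebra.ι R (Finsupp.single (Sum.inr (i, s)) 1)

/-- The linear functional equal to `1` on every basis vector. -/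
def osFunctional : Module.Dual R (OSIndex n r →₀ R) :=
  Finsupp.linearCombination R (fun _ => (1 : R))

/-- The left interior product (contraction) `∂` by the all-one functional. -/
def osContr : OSAlgebra R n r →ₗ[R] OSAlgebra R n r :=
  CliffordAlgebra.contractLeft (osFunctional R n r)

/-- The two-sided ideal `J ⊆ Λ` generated by the Orlik–Solomon relations. -/
def osIdeal : TwoSidedIdeal (OSAlgebra R n r) :=
  TwoSidedIdeal.span
    ({x | ∃ i j k : Fin n, i ≠ j ∧ j ≠ k ∧ k ≠ i ∧
        x = eP R n r i j * eP R n r j k + eP R n r j k * eP R n r k i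
          + eP R n r k i * eP R n r i j} ∪
     {x | ∃ (i j : Fin n) (s : Fin r), i ≠ j ∧
        x = eQ R n r i s * eQ R n r j s - eP R n r i j * eQ R n r i s
          + eP R n r i j * eQ R n r j s} ∪
     {x | ∃ (i : Fin n) (s t : Fin r), s ≠ t ∧ x = eQ R n r i s * eQ R n r i t})

lemma eP_symm (i j : Fin n) : eP R n r i j = eP R n r j i := by
  unfold eP
  rcases eq_or_ne i j with h | h
  · simp [h]
  · rw [dif_neg h, dif_neg h.symm]
    exact congrArg _ (congrArg (fun x => Finsupp.single x (1:R))
      (congrArg (Sum.inl) (Subtype.ext Sym2.eq_swap)))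

lemma eP_anticomm (i j k l : Fin n) :
    eP R n r i j * eP R n r k l = -(eP R n r k l * eP R n r i j) := by
  unfold eP
  split_ifs <;>
    first
      | simp
      | exact eq_neg_of_add_eq_zero_left (ExteriorAlgebra.ι_add_mul_swap _ _)

lemma osContr_one : osContr R n r 1 = 0 := by
  simpa [osContr] using CliffordAlgebra.contractLeft_one _ _

lemma osContr_eP_mul (i j : Fin n) (hij : i ≠ j) (x : OSAlgebra R n r) :
    osContr R n r (eP R n r i j * x) = x - eP R n r i j * osContr R n r x := by
  simp only [osContr, eP, dif_neg hij]
  rw [CliffordAlgebra.contractLeft_ι_mul]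
  simp [osFunctional, Finsupp.linearCombination_single]

lemma gen_mem_osIdeal (i j k : Fin n) (hij : i ≠ j) (hjk : j ≠ k) (hki : k ≠ i) :
    eP R n r i j * eP R n r j k + eP R n r j k * eP R n r k i
      + eP R n r k i * eP R n r i j ∈ osIdeal R n r :=
  TwoSidedIdeal.subset_span (Or.inl (Or.inl ⟨i, j, k, hij, hjk, hki, rfl⟩))

/-- The product `eP a b₁ * eP b₁ b₂ * ⋯` along a list of vertices. -/
def chain (a : Fin n) : List (Fin n) → OSAlgebra R n r
  | [] => 1
  | b :: l => eP R n r a b * chain b l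

lemma chain_cons (a b : Fin n) (l : List (Fin n)) :
    chain R n r a (b :: l) = eP R n r a b * chain R n r b l := rfl

lemma key : ∀ (l : List (Fin n)) (a b : Fin n), l ≠ [] →
    (a :: b :: l).Nodup →
    osContr R n r (chain R n r a (b :: (l ++ [a]))) ∈ osIdeal R n r := by
  intro l
  induction l with
  | nil => intro a b h _; exact absurd rfl h
  | cons c t ih =>
    intro a b _ hnd
    cases t with
    | nil =>
      simp only [List.nodup_cons, List.mem_cons, not_or, List.mem_singleton,
        List.not_mem_nil, List.nodup_nil] at hnd
      obtain ⟨⟨hab, hac, -⟩, ⟨hbc, -⟩, -⟩ := hnd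
      have hca : c ≠ a := fun h => hac h.symm
      simp only [chain, List.cons_append, List.nil_append, List.singleton_append]
      rw [osContr_eP_mul R n r a b hab, osContr_eP_mul R n r b c hbc,
        osContr_eP_mul R n r c a hca, osContr_one]
      have := gen_mem_osIdeal R n r a b c hab hbc hca
      convert this using 1
      rw [eP_anticomm R n r c a a b]
      noncomm_ring
    | cons d t' =>
      simp only [List.nodup_cons, List.mem_cons, not_or] at hnd
      obtain ⟨⟨hab, hac, hadt⟩, ⟨hbc, hbdt⟩, hcdt, hndt⟩ := hnd
      have hca : c ≠ a := fun h => hac h.symm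
      simp only [List.cons_append]
      rw [chain_cons, chain_cons]
      set z := chain R n r c (d :: (t' ++ [a])) with hz
      set G := eP R n r a b * eP R n r b c + eP R n r b c * eP R n r c a
        + eP R n r c a * eP R n r a b with hG
      have hsplit : eP R n r a b * (eP R n r b c * z)
          = G * z + eP R n r a b * (eP R n r a c * z)
            - eP R n r b c * (eP R n r a c * z) := by
        rw [hG, eP_symm R n r c a, eP_anticomm R n r a c a b]
        noncomm_ring
      have hGz : osContr R n r (G * z) = G * osContr R n r z := by
        have hexp : G * z = eP R n r a b * (eP R n r b c * z)
            + eP R n r b c * (eP R n r c a * z)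
            + eP R n r c a * (eP R n r a b * z) := by
          rw [hG]; noncomm_ring
        rw [hexp, map_add, map_add]
        simp only [osContr_eP_mul R n r a b hab, osContr_eP_mul R n r b c hbc,
          osContr_eP_mul R n r c a hca]
        rw [hG]
        noncomm_ring
      have hc' : osContr R n r (eP R n r a c * z) ∈ osIdeal R n r := by
        have hih := ih a c (by simp) (by
          simp only [List.nodup_cons, List.mem_cons, not_or]
          exact ⟨⟨hac, hadt⟩, hcdt, hndt⟩)
        simp only [List.cons_append] at hih
        rw [chain_cons, ← hz] at hih
        exact hih
      have hG_mem : G ∈ osIdeal R n r := gen_mem_osIdeal R n r a b c hab hbc hca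
      have hmem : G * osContr R n r z
          + eP R n r b c * osContr R n r (eP R n r a c * z)
          - eP R n r a b * osContr R n r (eP R n r a c * z) ∈ osIdeal R n r :=
        TwoSidedIdeal.sub_mem _
          (TwoSidedIdeal.add_mem _
            (TwoSidedIdeal.mul_mem_right _ _ _ hG_mem)
            (TwoSidedIdeal.mul_mem_left _ _ _ hc'))
          (TwoSidedIdeal.mul_mem_left _ _ _ hc')
      rw [hsplit, map_sub, map_add, hGz,
        osContr_eP_mul R n r a b hab, osContr_eP_mul R n r b c hbc]
      convert hmem using 1
      noncomm_ring

lemma chain_ofFn (m : ℕ) (v : Fin (m + 1) → Fin n) (w : Fin n) :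
    (List.ofFn fun k : Fin (m + 1) =>
        eP R n r (v k) (if hk : k.1 + 1 < m + 1 then v ⟨k.1 + 1, hk⟩ else w)).prod
      = chain R n r (v 0) ((List.ofFn fun k : Fin m => v k.succ) ++ [w]) := by
  induction m with
  | zero =>
    simp [chain_cons, chain]
  | succ m ihm =>
    rw [List.ofFn_succ, List.prod_cons]
    rw [show (List.ofFn fun k : Fin (m + 1) => v k.succ)
        = v 1 :: List.ofFn fun k : Fin m => v k.succ.succ from by
      rw [List.ofFn_succ]; rfl]
    rw [List.cons_append, chain_cons]
    have h1 : (if hk : (0 : Fin (m+2)).1 + 1 < m + 2 then v ⟨(0 : Fin (m+2)).1 + 1, hk⟩ else w)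
        = v 1 := by
      rw [dif_pos (by simp)]
      congr 1
    rw [h1]
    congr 1
    have := ihm (fun k => v k.succ)
    simp only [Fin.succ_zero_eq_one] at this
    rw [← this]
    refine congrArg List.prod (congrArg List.ofFn (funext fun k => ?_))
    refine congrArg (eP R n r (v k.succ)) ?_
    simp only [Fin.val_succ]
    rcases Nat.lt_or_ge (k.1 + 1) (m + 1) with hk | hk
    · rw [dif_pos (by omega), dif_pos hk]
      rfl
    · rw [dif_neg (by omega), dif_neg (by omega)]

/-- For every `h ≥ 3` and pairwise distinct `i₁, …, i_h ∈ {1,…,n}`, the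
element `∂(e_{i₁i₂} · e_{i₂i₃} ⋯ e_{i_{h−1}i_h} · e_{i_h i₁})` lies in `J`. -/
theorem contraction_cycle_mem_osIdeal
    (hn : 1 ≤ n) (hr : 1 ≤ r) (h : ℕ) (hh : 3 ≤ h)
    (idx : Fin h → Fin n) (hinj : Function.Injective idx) :
    osContr R n r
      ((List.ofFn fun k : Fin h =>
        eP R n r (idx k) (idx ⟨(k.1 + 1) % h, Nat.mod_lt _ (by omega)⟩)).prod) ∈
      osIdeal R n r := by
  obtain ⟨p, rfl⟩ : ∃ p, h = p + 3 := ⟨h - 3, by omega⟩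
  have hbridge : (List.ofFn fun k : Fin (p + 3) =>
        eP R n r (idx k) (idx ⟨(k.1 + 1) % (p + 3), Nat.mod_lt _ (by omega)⟩))
      = List.ofFn fun k : Fin (p + 2 + 1) =>
        eP R n r (idx k) (if hk : k.1 + 1 < p + 2 + 1 then idx ⟨k.1 + 1, hk⟩ else idx 0) := by
    refine congrArg List.ofFn (funext fun k => congrArg _ ?_)
    rcases Nat.lt_or_ge (k.1 + 1) (p + 3) with hk | hk
    · rw [dif_pos hk]
      congr 1
      ext
      exact Nat.mod_eq_of_lt hk
    · rw [dif_neg (by omega)]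
      congr 1
      ext
      simp only [Fin.val_zero]
      rw [show k.1 + 1 = p + 3 from by omega, Nat.mod_self]
  rw [hbridge, chain_ofFn R n r (p + 2) idx (idx 0)]
  have hlist : List.ofFn idx
      = idx 0 :: idx 1 :: List.ofFn (fun k : Fin (p + 1) => idx k.succ.succ) := by
    rw [List.ofFn_succ, List.ofFn_succ]
    simp [Fin.succ_zero_eq_one]
  have hofn : (List.ofFn fun k : Fin (p + 2) => idx k.succ)
      = idx 1 :: List.ofFn (fun k : Fin (p + 1) => idx k.succ.succ) := by
    rw [List.ofFn_succ]
    simp [Fin.succ_zero_eq_one]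
  rw [hofn, List.cons_append]
  refine key R n r _ (idx 0) (idx 1) ?_ ?_
  · intro hcon
    have := congrArg List.length hcon
    simp at this
  · rw [← hlist]
    exact List.nodup_ofFn.mpr hinj
end
end

section
/- With notation as in the context: for every integer h ≥ 0, every sequence i₀, i₁, …, i_h of pairwise distinct elements of {1,…,n}, and all 1 ≤ s, t ≤ r with s ≠ t, the element e_{i₀}^s · e_{i_h}^t · e_{i₀ i₁} · e_{i₁ i₂} ⋯ e_{i_{h−1} i_h} lies in the two-sided ideal J (for h = 0 the product of the e_{i_k i_{k+1}} factors is empty and equals 1). -/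
noncomputable section

variable (R : Type) [CommRing R] (n r : ℕ)

/-!
Induction on `h`, with `p = i_{h-1}` and `l = i_h`. The second relation says
`e_l^t e_{pl} ≡ e_p^t (e_l^t + e_{pl})` modulo `J`. Since all generators anticommute, `e_l^t` can
be moved (up to the sign `(-1)^(h-1)`) past `e_{i₀i₁} ⋯ e_{i_{h-2}i_{h-1}}` to meet `e_{pl}`,
traded for `e_p^t` and moved back; the result is a right multiple of the element for the path
`i₀, …, i_{h-1}`. The case `h = 0` is the third relation.
-/

theorem ExteriorAlgebra.ι_mul_ι_anticomm {R M : Type*} [CommRing R] [AddCommGroup M]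
    [Module R M] (x y : M) :
    ExteriorAlgebra.ι R x * ExteriorAlgebra.ι R y
      = -(ExteriorAlgebra.ι R y * ExteriorAlgebra.ι R x) :=
  eq_neg_of_add_eq_zero_left (ExteriorAlgebra.ι_add_mul_swap x y)

theorem ExteriorAlgebra.ι_mul_prod_list_of_mem_range {R M : Type*} [CommRing R]
    [AddCommGroup M] [Module R M] (m : M) :
    ∀ L : List (ExteriorAlgebra R M), (∀ x ∈ L, x ∈ LinearMap.range (ExteriorAlgebra.ι R)) →
      ExteriorAlgebra.ι R m * L.prod
        = ((-1 : ℤ) ^ L.length) • (L.prod * ExteriorAlgebra.ι R m)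
  | [], _ => by simp
  | x :: L, hL => by
    obtain ⟨y, rfl⟩ := hL x List.mem_cons_self
    have ih := ι_mul_prod_list_of_mem_range m L fun z hz => hL z (List.mem_cons_of_mem _ hz)
    rw [List.prod_cons, ← mul_assoc, ι_mul_ι_anticomm, neg_mul, mul_assoc, ih,
      List.length_cons, pow_succ', mul_smul, neg_one_zsmul, mul_smul_comm, ← mul_assoc]

theorem List.ofFn_succ_castSucc {α β : Type*} {h : ℕ} (f : α → α → β) (idx : Fin (h + 2) → α) :
    List.ofFn (fun k : Fin (h + 1) => f (idx k.castSucc) (idx k.succ))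
      = List.ofFn (fun k : Fin h => f (idx k.castSucc.castSucc) (idx k.succ.castSucc))
        ++ [f (idx (Fin.last h).castSucc) (idx (Fin.last (h + 1)))] := by
  simp only [List.ofFn_succ', List.concat_eq_append, Fin.succ_castSucc, Fin.succ_last]

theorem eP_mem_range_ι (i j : Fin n) : eP R n r i j ∈ LinearMap.range (ExteriorAlgebra.ι R) := by
  unfold eP
  split_ifs
  · exact zero_mem _
  · exact LinearMap.mem_range_self _ _

theorem eQ_mul_eP_sub_mem_osIdeal {i j : Fin n} (hij : i ≠ j) (s : Fin r) :
    eQ R n r j s * eP R n r i j - eQ R n r i s * eQ R n r j s - eQ R n r i s * eP R n r i j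
      ∈ osIdeal R n r := by
  have hrel : eQ R n r i s * eQ R n r j s - eP R n r i j * eQ R n r i s
      + eP R n r i j * eQ R n r j s ∈ osIdeal R n r :=
    TwoSidedIdeal.subset_span (Set.mem_union_left _ (Set.mem_union_right _ ⟨i, j, s, hij, rfl⟩))
  obtain ⟨x, hx⟩ := eP_mem_range_ι R n r i j
  convert (osIdeal R n r).neg_mem hrel using 1
  simp only [eQ, ← hx, ExteriorAlgebra.ι_mul_ι_anticomm (Finsupp.single _ _) x]
  abel

theorem mul_eQ_mul_prod_mul_eP_mem_osIdeal {a : OSAlgebra R n r} {L : List (OSAlgebra R n r)}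
    (hL : ∀ x ∈ L, x ∈ LinearMap.range (ExteriorAlgebra.ι R)) {p l : Fin n} (hpl : p ≠ l)
    (t : Fin r) (ha : a * eQ R n r p t * L.prod ∈ osIdeal R n r) :
    a * eQ R n r l t * (L.prod * eP R n r p l) ∈ osIdeal R n r := by
  set J := osIdeal R n r
  set ε : ℤ := (-1) ^ L.length
  have hcomm (i : Fin n) : eQ R n r i t * L.prod = ε • (L.prod * eQ R n r i t) :=
    ExteriorAlgebra.ι_mul_prod_list_of_mem_range _ L hL
  have key : a * eQ R n r l t * (L.prod * eP R n r p l)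
      = ε • (a * L.prod * (eQ R n r l t * eP R n r p l - eQ R n r p t * eQ R n r l t
          - eQ R n r p t * eP R n r p l))
        + a * eQ R n r p t * L.prod * (eQ R n r l t + eP R n r p l) := by
    simp only [mul_assoc, ← mul_assoc (eQ R n r _ t) L.prod, hcomm]
    simp only [smul_mul_assoc, mul_smul_comm, mul_sub, mul_add, mul_assoc, smul_sub]
    abel
  rw [key]
  refine J.add_mem ?_ (J.mul_mem_right _ _ ha)
  rw [zsmul_eq_mul]
  exact J.mul_mem_left _ _ (J.mul_mem_left _ _ (eQ_mul_eP_sub_mem_osIdeal R n r hpl t))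

theorem path_two_colors_mem_osIdeal
    (h : ℕ)
    (idx : Fin (h + 1) → Fin n) (hinj : Function.Injective idx)
    (s t : Fin r) (hst : s ≠ t) :
    eQ R n r (idx 0) s * eQ R n r (idx (Fin.last h)) t *
        (List.ofFn fun k : Fin h => eP R n r (idx k.castSucc) (idx k.succ)).prod ∈
      osIdeal R n r := by
  induction h with
  | zero =>
    have hst_rel : eQ R n r (idx 0) s * eQ R n r (idx 0) t ∈ osIdeal R n r :=
      TwoSidedIdeal.subset_span (Set.mem_union_right _ ⟨idx 0, s, t, hst, rfl⟩)
    simpa using hst_rel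
  | succ h ih =>
    have hpl : idx (Fin.last h).castSucc ≠ idx (Fin.last (h + 1)) :=
      hinj.ne (Fin.castSucc_lt_last _).ne
    have hpath := ih (idx ∘ Fin.castSucc) (hinj.comp (Fin.castSucc_injective _))
    rw [List.ofFn_succ_castSucc, List.prod_append, List.prod_singleton]
    refine mul_eQ_mul_prod_mul_eP_mem_osIdeal R n r ?_ hpl t hpath
    simp only [List.mem_ofFn, forall_exists_index]
    rintro _ k rfl
    exact eP_mem_range_ι R n r _ _
end
end
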